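/- Let n ∈ ℕ, 0 < s < n, q > n/s, j ∈ ℤ, and x ∈ ℝ^n. Then for every measurable function f on ℝ^n, ‖ f(x + 2^{-j} y)/(1+|y|)^s ‖_{L^{n/s,∞}(ℝ^n)} (quasi-norm in the variable y) ≤ C · M_{L^q} f(x), where C depends only on n, s, q (not on j or x). -/

import Mathlib

open MeasureTheory Metric Set
open scoped ENNReal

/-- Weak Lorentz quasi-norm `‖f‖_{L^{p,∞}} = sup_{λ>0} λ |{|f|>λ}|^{1/p}`. -/
noncomputable def weakLorentzNorm {n : ℕ} (f : EuclideanSpace ℝ (Fin n) → ℝ) (p : ℝ) : ℝ≥0∞ :=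
  ⨆ (l : ℝ) (_ : 0 < l), ENNReal.ofReal l * (volume {x | l < |f x|}) ^ (1 / p)

/-- Centered `L^q` maximal function `M_{L^q} f x`. -/
noncomputable def maxLq {n : ℕ} (f : EuclideanSpace ℝ (Fin n) → ℝ) (q : ℝ)
    (x : EuclideanSpace ℝ (Fin n)) : ℝ≥0∞ :=
  ⨆ (r : ℝ) (_ : 0 < r),
    ((volume (ball x r))⁻¹ * ∫⁻ y in ball x r, ENNReal.ofReal (|f y| ^ q)) ^ (1 / q)

/-!
Write `g y = f (x + 2^{-j} y)`, so that `M_{L^q} g 0 ≤ M_{L^q} f x` and it suffices to treat `g`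
at the origin. Given `λ > 0`, choose the scale `R` with `λ R^s = M_{L^q} g 0`. The superlevel set
`{|g| > λ (1+|y|)^s}` is covered by the ball of radius `R` and by the dyadic pieces
`{|y| < 2^{k+1} R, |g| > λ (2^k R)^s}`. By Chebyshev's inequality on balls the `k`-th piece has
measure at most `2^n (2^{n-sq})^k |B_R|`, a geometric series because `sq > n`. Hence the
superlevel set has measure `≲ R^n`, and `λ (R^n)^{s/n} = λ R^s = M_{L^q} g 0`.
-/

theorem setOf_lt_abs_div_subset {E : Type*} [SeminormedAddCommGroup E] (f : E → ℝ) {l s R : ℝ}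
    (hl : 0 ≤ l) (hs : 0 ≤ s) (hR : 0 < R) :
    {y | l < |f y / (1 + ‖y‖) ^ s|} ⊆ (ball 0 R ∩ {y | l < |f y|}) ∪
      ⋃ k : ℕ, ball 0 (2 ^ (k + 1) * R) ∩ {y | l * (2 ^ k * R) ^ s < |f y|} := by
  intro y hy
  have hpos : 0 < (1 + ‖y‖) ^ s := by positivity
  have hy' : l * (1 + ‖y‖) ^ s < |f y| := by
    rwa [mem_ofPred_eq, abs_div, abs_of_pos hpos, lt_div_iff₀ hpos] at hy
  rcases lt_or_ge ‖y‖ R with hyR | hyR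
  · refine Or.inl ⟨mem_ball_zero_iff.2 hyR, lt_of_le_of_lt ?_ hy'⟩
    exact le_mul_of_one_le_right hl (Real.one_le_rpow (by simp) hs)
  · obtain ⟨k, hk, hk'⟩ := exists_nat_pow_near ((one_le_div hR).2 hyR) one_lt_two
    refine Or.inr (mem_iUnion.2 ⟨k, mem_ball_zero_iff.2 ((div_lt_iff₀ hR).1 hk'), ?_⟩)
    refine lt_of_le_of_lt ?_ hy'
    have : 2 ^ k * R ≤ 1 + ‖y‖ := by linarith [(le_div_iff₀ hR).1 hk]
    gcongr

theorem dyadic_ratio_identity {l R : ℝ} (hl : 0 < l) (hR : 0 < R) (s q : ℝ) (n k : ℕ) :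
    (l * R ^ s / (l * (2 ^ k * R) ^ s)) ^ q * (2 ^ (k + 1)) ^ n
      = 2 ^ n * (2 ^ ((n : ℝ) - s * q)) ^ k := by
  have h2k : ((2 : ℝ) ^ k) ^ s = 2 ^ (s * k) := by
    rw [← Real.rpow_natCast, ← Real.rpow_mul zero_le_two, mul_comm]
  have hratio : l * R ^ s / (l * (2 ^ k * R) ^ s) = 2 ^ (-(s * k)) := by
    rw [Real.mul_rpow (by positivity) hR.le, h2k, Real.rpow_neg zero_le_two]
    field_simp
  rw [hratio, ← Real.rpow_mul zero_le_two, ← pow_mul, ← Real.rpow_natCast 2 ((k + 1) * n),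
    ← Real.rpow_natCast (2 ^ _) k, ← Real.rpow_mul zero_le_two, ← Real.rpow_natCast 2 n,
    ← Real.rpow_add two_pos, ← Real.rpow_add two_pos]
  congr 1
  push_cast
  ring

section

variable {n : ℕ} {f : EuclideanSpace ℝ (Fin n) → ℝ} {q : ℝ}

theorem setLIntegral_ball_le_maxLq_rpow_mul (hq : 0 < q) (x : EuclideanSpace ℝ (Fin n))
    {r : ℝ} (hr : 0 < r) :
    ∫⁻ y in ball x r, ENNReal.ofReal (|f y| ^ q) ≤ maxLq f q x ^ q * volume (ball x r) := by
  have hmean : (volume (ball x r))⁻¹ * ∫⁻ y in ball x r, ENNReal.ofReal (|f y| ^ q)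
      ≤ maxLq f q x ^ q := by
    have hle : ((volume (ball x r))⁻¹ * ∫⁻ y in ball x r, ENNReal.ofReal (|f y| ^ q)) ^ (1 / q)
        ≤ maxLq f q x := le_iSup₂_of_le r hr le_rfl
    rwa [one_div, ENNReal.rpow_inv_le_iff hq] at hle
  rw [mul_comm]
  exact (ENNReal.inv_mul_le_iff (measure_ball_pos volume x hr).ne' measure_ball_lt_top.ne).1 hmean

theorem volume_ball_inter_lt_abs_le (hf : Measurable f) (hq : 0 < q)
    (x : EuclideanSpace ℝ (Fin n)) {r t : ℝ} (hr : 0 < r) (ht : 0 < t) :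
    volume (ball x r ∩ {y | t < |f y|})
      ≤ (maxLq f q x / ENNReal.ofReal t) ^ q * volume (ball x r) := by
  have htq : ENNReal.ofReal t ^ q ≠ 0 := by positivity
  have hsub : ball x r ∩ {y | t < |f y|}
      ⊆ {y | ENNReal.ofReal t ^ q ≤ ENNReal.ofReal (|f y| ^ q)} ∩ ball x r := by
    rintro y ⟨hy, hty⟩
    refine ⟨?_, hy⟩
    rw [ENNReal.ofReal_rpow_of_pos ht]
    exact ENNReal.ofReal_le_ofReal (Real.rpow_le_rpow ht.le hty.le hq.le)
  have hmeas : Measurable fun y => ENNReal.ofReal (|f y| ^ q) := by fun_prop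
  calc volume (ball x r ∩ {y | t < |f y|})
      ≤ volume.restrict (ball x r) {y | ENNReal.ofReal t ^ q ≤ ENNReal.ofReal (|f y| ^ q)} := by
        rw [Measure.restrict_apply' measurableSet_ball]
        exact measure_mono hsub
    _ ≤ (∫⁻ y in ball x r, ENNReal.ofReal (|f y| ^ q)) / ENNReal.ofReal t ^ q :=
        meas_ge_le_lintegral_div hmeas.aemeasurable htq
          (ENNReal.rpow_ne_top_of_nonneg hq.le ENNReal.ofReal_ne_top)
    _ ≤ maxLq f q x ^ q * volume (ball x r) / ENNReal.ofReal t ^ q := by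
        gcongr
        exact setLIntegral_ball_le_maxLq_rpow_mul hq x hr
    _ = (maxLq f q x / ENNReal.ofReal t) ^ q * volume (ball x r) := by
        rw [ENNReal.div_rpow_of_nonneg _ _ hq.le, ENNReal.mul_div_right_comm]

theorem map_add_smul_volume (x : EuclideanSpace ℝ (Fin n)) {c : ℝ} (hc : 0 < c) :
    Measure.map (fun y => x + c • y) volume = ENNReal.ofReal (c ^ n)⁻¹ • volume := by
  change Measure.map ((fun y => x + y) ∘ fun y => c • y) volume = _
  rw [← Measure.map_map (by fun_prop) (by fun_prop), Measure.map_addHaar_smul volume hc.ne',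
    Measure.map_smul, map_add_left_eq_self, finrank_euclideanSpace_fin,
    abs_of_pos (by positivity)]

theorem maxLq_comp_add_smul_le (q : ℝ) (x : EuclideanSpace ℝ (Fin n)) {c : ℝ} (hc : 0 < c) :
    maxLq (fun y => f (x + c • y)) q 0 ≤ maxLq f q x := by
  set h : EuclideanSpace ℝ (Fin n) → EuclideanSpace ℝ (Fin n) := fun y => x + c • y
  have hh : MeasurableEmbedding h :=
    ((Homeomorph.smulOfNeZero c hc.ne').trans (Homeomorph.addLeft x)).measurableEmbedding
  have hk : ENNReal.ofReal (c ^ n)⁻¹ ≠ 0 := (ENNReal.ofReal_pos.2 (by positivity)).ne'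
  refine iSup₂_le fun r hr => le_iSup₂_of_le (c * r) (by positivity) (le_of_eq ?_)
  have hpre : h ⁻¹' ball x (c * r) = ball 0 r := by
    ext y
    simp [h, norm_smul, abs_of_pos hc, mul_lt_mul_iff_right₀ hc]
  have hvol : volume (ball (0 : EuclideanSpace ℝ (Fin n)) r)
      = ENNReal.ofReal (c ^ n)⁻¹ * volume (ball x (c * r)) := by
    rw [← hpre, ← hh.map_apply, map_add_smul_volume x hc, Measure.smul_apply, smul_eq_mul]
  have hint : ∫⁻ y in ball 0 r, ENNReal.ofReal (|f (h y)| ^ q)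
      = ENNReal.ofReal (c ^ n)⁻¹ * ∫⁻ z in ball x (c * r), ENNReal.ofReal (|f z| ^ q) := by
    rw [← hpre, ← hh.lintegral_map (f := fun z => ENNReal.ofReal (|f z| ^ q)), ← hh.restrict_map,
      map_add_smul_volume x hc, Measure.restrict_smul, lintegral_smul_measure, smul_eq_mul]
  rw [hvol, hint, ENNReal.mul_inv (Or.inl hk) (Or.inl ENNReal.ofReal_ne_top), mul_mul_mul_comm,
    ENNReal.inv_mul_cancel hk ENNReal.ofReal_ne_top, one_mul]

/-- `|B_1| (1 + 2^n ∑_k (2^{n-sq})^k)`, with the geometric series summed. -/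
noncomputable def weakTypeConst (n : ℕ) (s q : ℝ) : ℝ≥0∞ :=
  volume (ball (0 : EuclideanSpace ℝ (Fin n)) 1)
    * (1 + 2 ^ n * (1 - ENNReal.ofReal (2 ^ ((n : ℝ) - s * q)))⁻¹)

theorem weakTypeConst_ne_zero (n : ℕ) (s q : ℝ) : weakTypeConst n s q ≠ 0 :=
  mul_ne_zero (measure_ball_pos volume _ one_pos).ne' (by simp)

theorem weakTypeConst_ne_top {n : ℕ} {s q : ℝ} (h : (n : ℝ) < s * q) :
    weakTypeConst n s q ≠ ∞ := by
  have hρ : ENNReal.ofReal (2 ^ ((n : ℝ) - s * q)) < 1 :=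
    ENNReal.ofReal_lt_one.2 (Real.rpow_lt_one_of_one_lt_of_neg one_lt_two (by linarith))
  refine ENNReal.mul_ne_top measure_ball_lt_top.ne (ENNReal.add_ne_top.2 ⟨ENNReal.one_ne_top, ?_⟩)
  exact ENNReal.mul_ne_top (ENNReal.pow_ne_top ENNReal.ofNat_ne_top)
    (ENNReal.inv_ne_top.2 (tsub_pos_of_lt hρ).ne')

variable {s : ℝ}

theorem volume_dyadic_piece_le (hf : Measurable f) (hq : 0 < q) {l R : ℝ} (hl : 0 < l)
    (hR : 0 < R) (hM : maxLq f q 0 = ENNReal.ofReal (l * R ^ s)) (k : ℕ) :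
    volume (ball (0 : EuclideanSpace ℝ (Fin n)) (2 ^ (k + 1) * R)
        ∩ {y | l * (2 ^ k * R) ^ s < |f y|})
      ≤ ENNReal.ofReal (2 ^ n * (2 ^ ((n : ℝ) - s * q)) ^ k)
        * volume (ball (0 : EuclideanSpace ℝ (Fin n)) R) := by
  calc _ ≤ (maxLq f q 0 / ENNReal.ofReal (l * (2 ^ k * R) ^ s)) ^ q
        * volume (ball (0 : EuclideanSpace ℝ (Fin n)) (2 ^ (k + 1) * R)) :=
        volume_ball_inter_lt_abs_le hf hq 0 (by positivity) (by positivity)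
    _ = _ := by
      rw [hM, ← ENNReal.ofReal_div_of_pos (by positivity),
        ENNReal.ofReal_rpow_of_nonneg (by positivity) hq.le,
        Measure.addHaar_ball_mul_of_pos volume 0 (by positivity), finrank_euclideanSpace_fin,
        ← mul_assoc, ← ENNReal.ofReal_mul (by positivity), dyadic_ratio_identity hl hR]

theorem volume_setOf_lt_abs_div_eq_zero (hf : Measurable f) (hq : 0 < q) (hs : 0 ≤ s) {l : ℝ}
    (hl : 0 < l) (hM : maxLq f q 0 = 0) :
    volume {y | l < |f y / (1 + ‖y‖) ^ s|} = 0 := by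
  have hnull : ∀ r t : ℝ, 0 < r → 0 < t →
      volume (ball (0 : EuclideanSpace ℝ (Fin n)) r ∩ {y | t < |f y|}) = 0 := by
    intro r t hr ht
    refine le_zero_iff.1 ((volume_ball_inter_lt_abs_le hf hq 0 hr ht).trans_eq ?_)
    rw [hM, ENNReal.zero_div, ENNReal.zero_rpow_of_pos hq, zero_mul]
  exact measure_mono_null (setOf_lt_abs_div_subset f hl.le hs one_pos)
    (measure_union_null (hnull _ _ one_pos hl)
      (measure_iUnion_null fun k => hnull _ _ (by positivity) (by positivity)))

theorem volume_setOf_lt_abs_div_le (hf : Measurable f) (hq : 0 < q) (hs : 0 ≤ s) {l R : ℝ}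
    (hl : 0 < l) (hR : 0 < R) (hM : maxLq f q 0 = ENNReal.ofReal (l * R ^ s)) :
    volume {y | l < |f y / (1 + ‖y‖) ^ s|} ≤ ENNReal.ofReal (R ^ n) * weakTypeConst n s q := by
  set B := volume (ball (0 : EuclideanSpace ℝ (Fin n)) R) with hB
  have hρ : (0 : ℝ) ≤ 2 ^ ((n : ℝ) - s * q) := by positivity
  calc volume {y | l < |f y / (1 + ‖y‖) ^ s|}
      ≤ volume (ball 0 R ∩ {y | l < |f y|})
        + ∑' k : ℕ, volume (ball 0 (2 ^ (k + 1) * R) ∩ {y | l * (2 ^ k * R) ^ s < |f y|}) :=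
        (measure_mono (setOf_lt_abs_div_subset f hl.le hs hR)).trans
          ((measure_union_le _ _).trans (add_le_add le_rfl (measure_iUnion_le _)))
    _ ≤ B + ∑' k : ℕ, ENNReal.ofReal (2 ^ n * (2 ^ ((n : ℝ) - s * q)) ^ k) * B :=
        add_le_add (measure_mono inter_subset_left)
          (ENNReal.tsum_le_tsum fun k => volume_dyadic_piece_le hf hq hl hR hM k)
    _ = B * (1 + 2 ^ n * (1 - ENNReal.ofReal (2 ^ ((n : ℝ) - s * q)))⁻¹) := by
        simp only [ENNReal.tsum_mul_right, ENNReal.ofReal_mul (pow_nonneg zero_le_two n),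
          ENNReal.ofReal_pow hρ, ENNReal.ofReal_pow zero_le_two, ENNReal.ofReal_ofNat,
          ENNReal.tsum_mul_left, ENNReal.tsum_geometric]
        ring
    _ = ENNReal.ofReal (R ^ n) * weakTypeConst n s q := by
        rw [hB, Measure.addHaar_ball_of_pos volume 0 hR, finrank_euclideanSpace_fin, weakTypeConst]
        ring

theorem weakLorentzNorm_div_le (hn : 0 < n) (hs : 0 < s) (hq : 0 < q) (hf : Measurable f) :
    weakLorentzNorm (fun y => f y / (1 + ‖y‖) ^ s) (n / s)
      ≤ weakTypeConst n s q ^ (s / n) * maxLq f q 0 := by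
  have hsn : 0 < s / n := by positivity
  refine iSup₂_le fun l hl => ?_
  rw [one_div_div]
  rcases eq_or_ne (maxLq f q 0) 0 with hM0 | hM0
  · rw [volume_setOf_lt_abs_div_eq_zero hf hq hs.le hl hM0, ENNReal.zero_rpow_of_pos hsn,
      mul_zero]
    exact zero_le
  rcases eq_or_ne (maxLq f q 0) ∞ with hMtop | hMtop
  · rw [hMtop, ENNReal.mul_top
      (ENNReal.rpow_pos_of_nonneg (weakTypeConst_ne_zero n s q).bot_lt hsn.le).ne']
    exact le_top
  set R := ((maxLq f q 0).toReal / l) ^ s⁻¹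
  have hα : 0 < (maxLq f q 0).toReal := ENNReal.toReal_pos hM0 hMtop
  have hR : 0 < R := by positivity
  have hM : maxLq f q 0 = ENNReal.ofReal (l * R ^ s) := by
    rw [Real.rpow_inv_rpow (by positivity) hs.ne', mul_div_cancel₀ _ hl.ne',
      ENNReal.ofReal_toReal hMtop]
  calc ENNReal.ofReal l * volume {y | l < |f y / (1 + ‖y‖) ^ s|} ^ (s / n)
      ≤ ENNReal.ofReal l * (ENNReal.ofReal (R ^ n) * weakTypeConst n s q) ^ (s / n) := by
        gcongr
        exact volume_setOf_lt_abs_div_le hf hq hs.le hl hR hM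
    _ = weakTypeConst n s q ^ (s / n) * maxLq f q 0 := by
        rw [ENNReal.mul_rpow_of_nonneg _ _ hsn.le,
          ENNReal.ofReal_rpow_of_nonneg (by positivity) hsn.le, ← Real.rpow_natCast,
          ← Real.rpow_mul hR.le, mul_div_cancel₀ _ (by positivity), hM,
          ENNReal.ofReal_mul hl.le]
        ring

end

theorem statement1 (n : ℕ) (hn : 0 < n) (s q : ℝ) (hs0 : 0 < s)
    (hq : (n : ℝ) / s < q) :
    ∃ C : ℝ, 0 < C ∧ ∀ (j : ℤ) (x : EuclideanSpace ℝ (Fin n))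
      (f : EuclideanSpace ℝ (Fin n) → ℝ), Measurable f →
      weakLorentzNorm (fun y => f (x + (2 : ℝ) ^ (-j) • y) / (1 + ‖y‖) ^ s) ((n : ℝ) / s)
        ≤ ENNReal.ofReal C * maxLq f q x := by
  have hq0 : 0 < q := lt_trans (by positivity) hq
  have hC : weakTypeConst n s q ^ (s / n) ≠ ∞ :=
    ENNReal.rpow_ne_top_of_nonneg (by positivity)
      (weakTypeConst_ne_top (by linarith [(div_lt_iff₀ hs0).1 hq]))
  refine ⟨(weakTypeConst n s q ^ (s / n)).toReal,
    ENNReal.toReal_pos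
      (ENNReal.rpow_pos_of_nonneg (weakTypeConst_ne_zero n s q).bot_lt (by positivity)).ne' hC,
    fun j x f hf => ?_⟩
  rw [ENNReal.ofReal_toReal hC]
  calc _ ≤ weakTypeConst n s q ^ (s / n) * maxLq (fun y => f (x + (2 : ℝ) ^ (-j) • y)) q 0 :=
        weakLorentzNorm_div_le hn hs0 hq0 (hf.comp (by fun_prop))
    _ ≤ _ := by
        gcongr
        exact maxLq_comp_add_smul_le q x (zpow_pos two_pos _)
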